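/- Let 1 < p ≤ 2, δ ≥ 0, ε > 0. There exists c_ε > 0 depending only on ε and p such that for all symmetric 3×3 matrices P, Q and all t ≥ 0: φ_{|Q|}(t) ≤ c_ε·φ_{|P|}(t) + ε·|F(Q)−F(P)|², where φ_a is the shifted N-function and F(P) := (δ+|P|)^{(p-2)/2}P. -/

import Mathlib

open scoped BigOperators

noncomputable def normF (P : Matrix (Fin 3) (Fin 3) ℝ) : ℝ :=
  Real.sqrt (∑ i, ∑ j, (P i j) ^ 2)

noncomputable def Fmap (p δ : ℝ) (P : Matrix (Fin 3) (Fin 3) ℝ) :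
    Matrix (Fin 3) (Fin 3) ℝ :=
  ((δ + normF P) ^ ((p - 2) / 2)) • P

noncomputable def phiN' (p δ t : ℝ) : ℝ := (δ + t) ^ (p - 2) * t

noncomputable def phiShift (p δ a t : ℝ) : ℝ :=
  ∫ s in (0:ℝ)..t, phiN' p δ (a + s) * (s / (a + s))

noncomputable def toE (P : Matrix (Fin 3) (Fin 3) ℝ) : EuclideanSpace ℝ (Fin 3 × Fin 3) :=
  WithLp.toLp 2 (fun ij : Fin 3 × Fin 3 => P ij.1 ij.2)

lemma normF_eq (P : Matrix (Fin 3) (Fin 3) ℝ) : normF P = ‖toE P‖ := by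
  rw [EuclideanSpace.norm_eq, normF]
  congr 1
  rw [Fintype.sum_prod_type]
  simp [toE, Real.norm_eq_abs, sq_abs]

lemma normF_nonneg (P : Matrix (Fin 3) (Fin 3) ℝ) : 0 ≤ normF P := Real.sqrt_nonneg _

lemma normF_smul (r : ℝ) (P : Matrix (Fin 3) (Fin 3) ℝ) : normF (r • P) = |r| * normF P := by
  have h : toE (r • P) = r • toE P := by ext; simp [toE]
  rw [normF_eq, h, norm_smul, normF_eq, Real.norm_eq_abs]

lemma normF_sub_ge (A B : Matrix (Fin 3) (Fin 3) ℝ) : normF B - normF A ≤ normF (A - B) := by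
  have h : toE (A - B) = toE A - toE B := by ext; simp [toE]
  rw [normF_eq (A-B), h, normF_eq A, normF_eq B, norm_sub_rev]
  exact norm_sub_norm_le _ _

lemma phi_eq {p δ a t : ℝ} (hδ : 0 ≤ δ) (ha : 0 ≤ a) (ht : 0 ≤ t) :
    phiShift p δ a t = ∫ s in (0:ℝ)..t, (δ + a + s) ^ (p - 2) * s := by
  refine intervalIntegral.integral_congr (fun s hs => ?_)
  rw [Set.uIcc_of_le ht] at hs
  obtain ⟨hs0, hst⟩ := hs
  rcases eq_or_lt_of_le (by positivity : (0:ℝ) ≤ a + s) with h | h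
  · have hs : s = 0 := by linarith
    simp [phiN', hs, ← h]
  · have hne : a + s ≠ 0 := ne_of_gt h
    have : (a + s) * (s / (a + s)) = s := by field_simp
    rw [phiN', mul_assoc, this, add_assoc]

lemma cont_aux {p b t : ℝ} (hb : 0 < b) (ht : 0 ≤ t) :
    ContinuousOn (fun s => (b + s) ^ (p - 2) * s) (Set.uIcc 0 t) := by
  apply ContinuousOn.mul _ continuousOn_id
  apply ContinuousOn.rpow_const (by fun_prop)
  intro x hx
  rw [Set.uIcc_of_le ht] at hx
  exact Or.inl (by nlinarith [hx.1])

lemma phi_upper {p δ a t : ℝ} (hp : 1 < p) (hp2 : p ≤ 2) (hδ : 0 ≤ δ) (ha : 0 ≤ a)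
    (ht : 0 < t) : phiShift p δ a t ≤ 2 * (δ + a + t) ^ (p - 2) * t ^ 2 := by
  set b := δ + a with hbdef
  have hb : 0 ≤ b := by positivity
  have hbt : 0 < b + t := by linarith
  have heq : phiShift p δ a t = ∫ s in (0:ℝ)..t, (b + s) ^ (p - 2) * s :=
    phi_eq hδ ha ht.le
  rcases eq_or_lt_of_le hb with hb0 | hb0
  · -- b = 0
    have heq2 : phiShift p δ a t = ∫ s in (0:ℝ)..t, s ^ (p - 1) := by
      rw [heq]
      refine intervalIntegral.integral_congr (fun s hs => ?_)
      rw [Set.uIcc_of_le ht.le] at hs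
      rcases eq_or_lt_of_le hs.1 with h0 | h0
      · rw [← h0, ← hb0]
        simp [Real.zero_rpow (by linarith : p - 1 ≠ 0)]
      · rw [← hb0, zero_add, ← Real.rpow_add_one (ne_of_gt h0)]
        ring_nf
    have hval : phiShift p δ a t = t ^ p / p := by
      rw [heq2, integral_rpow (Or.inl (by linarith))]
      rw [Real.zero_rpow (by linarith : p - 1 + 1 ≠ 0)]
      ring_nf
    have htp : t ^ p = t ^ (p - 2) * t ^ 2 := by
      rw [← Real.rpow_two, ← Real.rpow_add ht]; ring_nf
    rw [hval, ← hb0, zero_add, htp]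
    have h1 : t ^ (p-2) * t ^ 2 / p ≤ t ^ (p-2) * t ^ 2 := by
      apply div_le_self (by positivity) (by linarith)
    nlinarith [Real.rpow_nonneg ht.le (p-2), sq_nonneg t,
      mul_nonneg (Real.rpow_nonneg ht.le (p-2)) (sq_nonneg t)]
  · -- b > 0
    have hcont := cont_aux (p := p) (t := t) hb0 ht.le
    have hint : IntervalIntegrable (fun s => (b + s) ^ (p - 2) * s) MeasureTheory.volume 0 t :=
      hcont.intervalIntegrable
    have h2p : (2:ℝ) ^ (2 - p) ≤ 2 := by
      calc (2:ℝ) ^ (2-p) ≤ (2:ℝ) ^ (1:ℝ) :=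
            Real.rpow_le_rpow_of_exponent_le one_le_two (by linarith)
        _ = 2 := Real.rpow_one 2
    have hhalf : ∀ x : ℝ, 0 < x → ((x) / 2) ^ (p - 2) = x ^ (p-2) * (2:ℝ) ^ (2-p) := by
      intro x hx
      rw [Real.div_rpow hx.le (by norm_num), show (2:ℝ)-p = -(p-2) by ring,
        Real.rpow_neg (by norm_num : (0:ℝ) ≤ 2)]
      rw [div_eq_mul_inv]
    rcases le_or_gt t b with hle | hlt
    · -- t ≤ b : integrand ≤ b^(p-2) * s
      have hmono : ∀ s ∈ Set.Icc (0:ℝ) t, (b + s) ^ (p-2) * s ≤ b ^ (p-2) * s := by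
        intro s hs
        apply mul_le_mul_of_nonneg_right _ hs.1
        exact Real.rpow_le_rpow_of_nonpos hb0 (by linarith [hs.1]) (by linarith)
      have hint2 : IntervalIntegrable (fun s => b ^ (p-2) * s) MeasureTheory.volume 0 t := by
        apply ContinuousOn.intervalIntegrable; fun_prop
      have := intervalIntegral.integral_mono_on ht.le hint hint2 hmono
      rw [heq]
      have hval : (∫ s in (0:ℝ)..t, b ^ (p-2) * s) = b ^ (p-2) * (t^2/2) := by
        rw [intervalIntegral.integral_const_mul, integral_id]; ring
      have hbb : b ^ (p-2) ≤ ((b+t)/2) ^ (p-2) :=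
        Real.rpow_le_rpow_of_nonpos (by positivity) (by linarith) (by linarith)
      rw [hhalf _ hbt] at hbb
      calc (∫ s in (0:ℝ)..t, (b + s) ^ (p - 2) * s) ≤ b ^ (p-2) * (t^2/2) := by
            rw [← hval]; exact this
        _ ≤ ((b+t)^(p-2) * 2) * (t^2/2) := by
            apply mul_le_mul_of_nonneg_right _ (by positivity)
            calc b ^ (p-2) ≤ (b+t)^(p-2) * (2:ℝ)^(2-p) := hbb
              _ ≤ (b+t)^(p-2) * 2 := by
                  apply mul_le_mul_of_nonneg_left h2p (Real.rpow_nonneg hbt.le _)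
        _ ≤ 2 * (b+t)^(p-2) * t^2 := by
            nlinarith [mul_nonneg (Real.rpow_nonneg hbt.le (p-2)) (sq_nonneg t)]
    · -- b < t : integrand ≤ s^(p-1)
      have hmono : ∀ s ∈ Set.Icc (0:ℝ) t, (b + s) ^ (p-2) * s ≤ s ^ (p-1) := by
        intro s hs
        rcases eq_or_lt_of_le hs.1 with h0 | h0
        · rw [← h0]
          simp [Real.zero_rpow (by linarith : p - 1 ≠ 0)]
        · rw [show p - 1 = (p-2) + 1 by ring, Real.rpow_add_one (ne_of_gt h0)]
          have : (b+s) ^ (p-2) ≤ s ^ (p-2) :=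
            Real.rpow_le_rpow_of_nonpos h0 (by linarith) (by linarith)
          exact mul_le_mul_of_nonneg_right this hs.1
      have hint2 : IntervalIntegrable (fun s => s ^ (p-1)) MeasureTheory.volume 0 t :=
        intervalIntegral.intervalIntegrable_rpow' (by linarith)
      have hcmp := intervalIntegral.integral_mono_on ht.le hint hint2 hmono
      have hval : (∫ s in (0:ℝ)..t, s ^ (p-1)) = t ^ p / p := by
        rw [integral_rpow (Or.inl (by linarith))]
        rw [Real.zero_rpow (by linarith : p - 1 + 1 ≠ 0)]
        ring_nf
      have htp : t ^ p = t ^ (p - 2) * t ^ 2 := by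
        rw [← Real.rpow_two, ← Real.rpow_add ht]; ring_nf
      have htb : t ^ (p-2) ≤ ((b+t)/2) ^ (p-2) :=
        Real.rpow_le_rpow_of_nonpos (by positivity) (by linarith) (by linarith)
      rw [hhalf _ hbt] at htb
      rw [heq]
      calc (∫ s in (0:ℝ)..t, (b + s) ^ (p - 2) * s) ≤ t ^ p / p := by rw [← hval]; exact hcmp
        _ ≤ t ^ p := div_le_self (Real.rpow_nonneg ht.le p) (by linarith)
        _ = t ^ (p-2) * t ^ 2 := htp
        _ ≤ ((b+t)^(p-2) * (2:ℝ)^(2-p)) * t ^ 2 := mul_le_mul_of_nonneg_right htb (sq_nonneg t)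
        _ ≤ 2 * (b+t)^(p-2) * t^2 := by
            have := mul_le_mul_of_nonneg_left h2p (Real.rpow_nonneg hbt.le (p-2))
            nlinarith [sq_nonneg t, mul_nonneg (Real.rpow_nonneg hbt.le (p-2)) (sq_nonneg t)]

lemma phi_lower {p δ a t : ℝ} (hp : 1 < p) (hp2 : p ≤ 2) (hδ : 0 ≤ δ) (ha : 0 ≤ a)
    (ht : 0 < t) : (δ + a + t) ^ (p - 2) * t ^ 2 / 2 ≤ phiShift p δ a t := by
  set b := δ + a with hbdef
  have hb : 0 ≤ b := by positivity
  have hbt : 0 < b + t := by linarith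
  have heq : phiShift p δ a t = ∫ s in (0:ℝ)..t, (b + s) ^ (p - 2) * s :=
    phi_eq hδ ha ht.le
  rcases eq_or_lt_of_le hb with hb0 | hb0
  · have heq2 : phiShift p δ a t = ∫ s in (0:ℝ)..t, s ^ (p - 1) := by
      rw [heq]
      refine intervalIntegral.integral_congr (fun s hs => ?_)
      rw [Set.uIcc_of_le ht.le] at hs
      rcases eq_or_lt_of_le hs.1 with h0 | h0
      · rw [← h0, ← hb0]
        simp [Real.zero_rpow (by linarith : p - 1 ≠ 0)]
      · rw [← hb0, zero_add, ← Real.rpow_add_one (ne_of_gt h0)]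
        ring_nf
    have hval : phiShift p δ a t = t ^ p / p := by
      rw [heq2, integral_rpow (Or.inl (by linarith))]
      rw [Real.zero_rpow (by linarith : p - 1 + 1 ≠ 0)]
      ring_nf
    have htp : t ^ p = t ^ (p - 2) * t ^ 2 := by
      rw [← Real.rpow_two, ← Real.rpow_add ht]; ring_nf
    rw [hval, ← hb0, zero_add, htp]
    rw [div_le_div_iff₀ (by norm_num) (by linarith)]
    nlinarith [mul_nonneg (Real.rpow_nonneg ht.le (p-2)) (sq_nonneg t)]
  · have hcont := cont_aux (p := p) (t := t) hb0 ht.le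
    have hint : IntervalIntegrable (fun s => (b + s) ^ (p - 2) * s) MeasureTheory.volume 0 t :=
      hcont.intervalIntegrable
    have hmono : ∀ s ∈ Set.Icc (0:ℝ) t, (b+t) ^ (p-2) * s ≤ (b + s) ^ (p-2) * s := by
      intro s hs
      apply mul_le_mul_of_nonneg_right _ hs.1
      exact Real.rpow_le_rpow_of_nonpos (by linarith [hs.1]) (by linarith [hs.2]) (by linarith)
    have hint2 : IntervalIntegrable (fun s => (b+t) ^ (p-2) * s) MeasureTheory.volume 0 t := by
      apply ContinuousOn.intervalIntegrable; fun_prop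
    have hcmp := intervalIntegral.integral_mono_on ht.le hint2 hint hmono
    have hval : (∫ s in (0:ℝ)..t, (b+t) ^ (p-2) * s) = (b+t) ^ (p-2) * t^2/2 := by
      rw [intervalIntegral.integral_const_mul, integral_id]; ring
    rw [heq]
    calc (b+t) ^ (p-2) * t^2/2 = ∫ s in (0:ℝ)..t, (b+t) ^ (p-2) * s := hval.symm
      _ ≤ _ := hcmp


lemma aux_mono {p δ r R : ℝ} (hp : 1 < p) (hp2 : p ≤ 2) (hδ : 0 ≤ δ) (hr : 0 ≤ r)
    (hrR : r ≤ R) : (δ + r) ^ (p - 2) * r ≤ (δ + R) ^ (p - 2) * R := by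
  rcases eq_or_lt_of_le hr with h0 | h0
  · rw [← h0, mul_zero]
    have hR : 0 ≤ R := by linarith
    positivity
  · have hR : 0 < R := lt_of_lt_of_le h0 hrR
    have hdr : 0 < δ + r := by linarith
    have hdR : 0 < δ + R := by linarith
    set u := (δ + r) / (δ + R) with hu
    have hu0 : 0 < u := by positivity
    have hu1 : u ≤ 1 := by
      rw [hu, div_le_one hdR]; linarith
    have h1 : r / R ≤ u := by
      rw [hu, div_le_div_iff₀ hR hdR]; nlinarith
    have h2 : u ≤ u ^ (2 - p) := by
      calc u = u ^ (1:ℝ) := (Real.rpow_one u).symm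
        _ ≤ u ^ (2 - p) := Real.rpow_le_rpow_of_exponent_ge hu0 hu1 (by linarith)
    have h3 : u ^ (2 - p) = (δ + r) ^ (2 - p) / (δ + R) ^ (2 - p) :=
      Real.div_rpow hdr.le hdR.le _
    have h4 : r / R ≤ (δ + r) ^ (2 - p) / (δ + R) ^ (2 - p) := by
      rw [← h3]; exact le_trans h1 h2
    have h5 : r * (δ + R) ^ (2 - p) ≤ R * (δ + r) ^ (2 - p) := by
      rw [div_le_div_iff₀ hR (Real.rpow_pos_of_pos hdR _)] at h4
      linarith
    have e1 : (δ + r) ^ (p - 2) = ((δ + r) ^ (2 - p))⁻¹ := by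
      rw [show p - 2 = -(2 - p) by ring, Real.rpow_neg hdr.le]
    have e2 : (δ + R) ^ (p - 2) = ((δ + R) ^ (2 - p))⁻¹ := by
      rw [show p - 2 = -(2 - p) by ring, Real.rpow_neg hdR.le]
    rw [e1, e2, inv_mul_eq_div, inv_mul_eq_div,
      div_le_div_iff₀ (Real.rpow_pos_of_pos hdr _) (Real.rpow_pos_of_pos hdR _)]
    nlinarith


lemma normF_Fmap (p δ : ℝ) (hδ : 0 ≤ δ) (P : Matrix (Fin 3) (Fin 3) ℝ) :
    normF (Fmap p δ P) = (δ + normF P) ^ ((p - 2) / 2) * normF P := by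
  rw [Fmap, normF_smul, abs_of_nonneg]
  exact Real.rpow_nonneg (by linarith [normF_nonneg P]) _

set_option maxHeartbeats 2000000 in
/-- Shift-change estimate: for every `ε > 0` there is `c_ε > 0` depending only on `ε`
    and `p` with `φ_{|Q|}(t) ≤ c_ε φ_{|P|}(t) + ε |F(Q)−F(P)|²`. -/
theorem stmt_8 (p : ℝ) (hp : 1 < p) (hp2 : p ≤ 2) :
    ∀ ε : ℝ, 0 < ε → ∃ c : ℝ, 0 < c ∧
      ∀ δ : ℝ, 0 ≤ δ → ∀ P Q : Matrix (Fin 3) (Fin 3) ℝ, P.IsSymm → Q.IsSymm →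
        ∀ t : ℝ, 0 ≤ t →
          phiShift p δ (normF Q) t ≤
            c * phiShift p δ (normF P) t +
              ε * (normF (Fmap p δ Q - Fmap p δ P)) ^ 2 := by
  intro ε hε
  have hp0 : 0 < p := by linarith
  set c₀ : ℝ := 1 - Real.sqrt (1/2) with hc₀def
  have hs2 : Real.sqrt (1/2) < 1 := by
    nlinarith [Real.sq_sqrt (by norm_num : (0:ℝ) ≤ 1/2), Real.sqrt_nonneg (1/2 : ℝ)]
  have hc₀ : 0 < c₀ := by simp only [hc₀def]; linarith
  set lam : ℝ := min (1/2) ((ε * c₀ ^ 2 / 18) ^ (p⁻¹ : ℝ)) with hlamdef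
  have hlam : 0 < lam := by
    apply lt_min (by norm_num)
    exact Real.rpow_pos_of_pos (by positivity) _
  have hlamhalf : lam ≤ 1/2 := min_le_left _ _
  have hlamp : lam ^ p ≤ ε * c₀ ^ 2 / 18 := by
    have h1 : lam ^ p ≤ ((ε * c₀ ^ 2 / 18) ^ (p⁻¹ : ℝ)) ^ p :=
      Real.rpow_le_rpow hlam.le (min_le_right _ _) hp0.le
    rwa [← Real.rpow_mul (by positivity), inv_mul_cancel₀ (ne_of_gt hp0),
      Real.rpow_one] at h1
  refine ⟨4 * lam ^ (p - 2), by positivity, ?_⟩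
  intro δ hδ P Q _ _ t ht
  have hεX : 0 ≤ ε * (normF (Fmap p δ Q - Fmap p δ P)) ^ 2 := by positivity
  rcases eq_or_lt_of_le ht with ht0 | ht0
  · rw [← ht0]
    have hz : ∀ a : ℝ, phiShift p δ a 0 = 0 := fun a => intervalIntegral.integral_same
    rw [hz, hz, mul_zero, zero_add]
    exact hεX
  set q := normF Q with hq
  set np := normF P with hnp
  have hq0 : 0 ≤ q := normF_nonneg Q
  have hnp0 : 0 ≤ np := normF_nonneg P
  set A : ℝ := δ + q + t with hA
  set B : ℝ := δ + np + t with hB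
  have hA0 : 0 < A := by simp only [hA]; linarith
  have hB0 : 0 < B := by simp only [hB]; linarith
  have hU : phiShift p δ q t ≤ 2 * A ^ (p - 2) * t ^ 2 := phi_upper hp hp2 hδ hq0 ht0
  have hL : B ^ (p - 2) * t ^ 2 / 2 ≤ phiShift p δ np t := phi_lower hp hp2 hδ hnp0 ht0
  have hφP0 : 0 ≤ phiShift p δ np t := le_trans (by positivity) hL
  rcases le_or_gt (lam * B) A with hcase | hcase
  · -- comparable case
    have h1 : A ^ (p - 2) ≤ lam ^ (p - 2) * B ^ (p - 2) := by
      rw [← Real.mul_rpow hlam.le hB0.le]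
      exact Real.rpow_le_rpow_of_nonpos (by positivity) hcase (by linarith)
    calc phiShift p δ q t ≤ 2 * A ^ (p - 2) * t ^ 2 := hU
      _ ≤ 2 * (lam ^ (p - 2) * B ^ (p - 2)) * t ^ 2 := by
          apply mul_le_mul_of_nonneg_right _ (sq_nonneg t)
          apply mul_le_mul_of_nonneg_left h1 (by norm_num)
      _ = (4 * lam ^ (p - 2)) * (B ^ (p - 2) * t ^ 2 / 2) := by ring
      _ ≤ (4 * lam ^ (p - 2)) * phiShift p δ np t := by
          apply mul_le_mul_of_nonneg_left hL (by positivity)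
      _ ≤ _ := le_add_of_nonneg_right hεX
  · -- far case : A < lam * B ≤ B/2
    have hBA : 2 * A < B := by
      have h2 : lam * B ≤ (1/2) * B := mul_le_mul_of_nonneg_right hlamhalf hB0.le
      have h3 : A < (1/2) * B := lt_of_lt_of_le hcase h2
      linarith
    have hnpq : δ + 2 * q + t < np := by simp only [hA, hB] at hBA; linarith
    have hqnp : q < np / 2 := by linarith
    have htnp : t < np := by linarith
    have hδnp : δ < np := by linarith
    have hnppos : 0 < np := by linarith
    have hdnp : 0 < δ + np := by linarith
    set GP : ℝ := (δ + np) ^ ((p - 2) / 2) * np with hGP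
    have hGP0 : 0 ≤ GP := by positivity
    have sq_rpow : ∀ x : ℝ, 0 ≤ x → (x ^ ((p-2)/2)) ^ 2 = x ^ (p - 2) := by
      intro x hx
      rw [← Real.rpow_natCast (x ^ ((p-2)/2)) 2, ← Real.rpow_mul hx]
      norm_num
    have hGP2 : GP ^ 2 = (δ + np) ^ (p - 2) * np ^ 2 := by
      rw [hGP, mul_pow, sq_rpow _ hdnp.le]
    -- |F Q| ≤ sqrt(1/2) * GP
    have hFQ : normF (Fmap p δ Q) ≤ Real.sqrt (1/2) * GP := by
      rw [normF_Fmap p δ hδ Q, ← hq]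
      set GQ : ℝ := (δ + q) ^ ((p - 2) / 2) * q with hGQ
      have hGQ0 : 0 ≤ GQ := by positivity
      have hGQ2 : GQ ^ 2 = (δ + q) ^ (p - 2) * q ^ 2 := by
        rw [hGQ, mul_pow, sq_rpow _ (by linarith)]
      have hkey : GQ ^ 2 ≤ (1/2) * GP ^ 2 := by
        rw [hGQ2, hGP2]
        have hm : (δ + q) ^ (p - 2) * q ≤ (δ + np) ^ (p - 2) * np :=
          aux_mono hp hp2 hδ hq0 (by linarith)
        have hnn : 0 ≤ (δ + q) ^ (p - 2) * q := by positivity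
        calc (δ + q) ^ (p - 2) * q ^ 2 = ((δ + q) ^ (p - 2) * q) * q := by ring
          _ ≤ ((δ + np) ^ (p - 2) * np) * q := mul_le_mul_of_nonneg_right hm hq0
          _ ≤ ((δ + np) ^ (p - 2) * np) * (np / 2) :=
              mul_le_mul_of_nonneg_left (by linarith) (le_trans hnn hm)
          _ = 1/2 * ((δ + np) ^ (p - 2) * np ^ 2) := by ring
      calc GQ = Real.sqrt (GQ ^ 2) := (Real.sqrt_sq hGQ0).symm
        _ ≤ Real.sqrt ((Real.sqrt (1/2) * GP) ^ 2) := by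
            apply Real.sqrt_le_sqrt
            rw [mul_pow (Real.sqrt (1/2)) GP 2, Real.sq_sqrt (by norm_num : (0:ℝ) ≤ 1/2)]
            exact hkey
        _ = Real.sqrt (1/2) * GP := Real.sqrt_sq (by positivity)
    have hdiff : c₀ * GP ≤ normF (Fmap p δ Q - Fmap p δ P) := by
      have h1 := normF_sub_ge (Fmap p δ Q) (Fmap p δ P)
      rw [normF_Fmap p δ hδ P, ← hnp, ← hGP] at h1
      simp only [hc₀def]
      have e : (1 - Real.sqrt (1/2)) * GP = GP - Real.sqrt (1/2) * GP := by ring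
      linarith
    have hdiff2 : c₀ ^ 2 * GP ^ 2 ≤ (normF (Fmap p δ Q - Fmap p δ P)) ^ 2 := by
      rw [← mul_pow]
      exact pow_le_pow_left₀ (by positivity) hdiff 2
    -- B^p ≤ 9 GP²
    have hB3 : B ≤ 3 * np := by simp only [hB]; linarith
    have hBp : B ^ p ≤ 9 * GP ^ 2 := by
      have h1 : B ^ (p - 2) ≤ (δ + np) ^ (p - 2) :=
        Real.rpow_le_rpow_of_nonpos hdnp (by simp only [hB]; linarith) (by linarith)
      have h2 : B ^ p = B ^ (p - 2) * B ^ 2 := by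
        rw [← Real.rpow_natCast B 2, ← Real.rpow_add hB0]
        norm_num
      have h3 : B ^ 2 ≤ 9 * np ^ 2 := by nlinarith
      rw [h2, hGP2]
      calc B ^ (p-2) * B ^ 2 ≤ (δ + np) ^ (p-2) * B ^ 2 :=
            mul_le_mul_of_nonneg_right h1 (sq_nonneg B)
        _ ≤ (δ + np) ^ (p-2) * (9 * np ^ 2) :=
            mul_le_mul_of_nonneg_left h3 (Real.rpow_nonneg hdnp.le _)
        _ = 9 * ((δ + np) ^ (p-2) * np ^ 2) := by ring
    -- conclude
    have hAp : A ^ p = A ^ (p - 2) * A ^ 2 := by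
      rw [← Real.rpow_natCast A 2, ← Real.rpow_add hA0]
      norm_num
    have hchain : phiShift p δ q t ≤ 2 * A ^ p := by
      rw [hAp]
      have htA : t ≤ A := by simp only [hA]; linarith
      have ht2 : t ^ 2 ≤ A ^ 2 := pow_le_pow_left₀ ht htA 2
      calc phiShift p δ q t ≤ 2 * A ^ (p-2) * t ^ 2 := hU
        _ ≤ 2 * A ^ (p-2) * A ^ 2 := by
            apply mul_le_mul_of_nonneg_left ht2
            positivity
        _ = 2 * (A ^ (p-2) * A ^ 2) := by ring
    have hApB : A ^ p ≤ lam ^ p * B ^ p := by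
      rw [← Real.mul_rpow hlam.le hB0.le]
      exact Real.rpow_le_rpow hA0.le hcase.le hp0.le
    have hfinal : phiShift p δ q t ≤ ε * (normF (Fmap p δ Q - Fmap p δ P)) ^ 2 := by
      have hBpnn : 0 ≤ B ^ p := Real.rpow_nonneg hB0.le p
      have hlampnn : 0 ≤ lam ^ p := Real.rpow_nonneg hlam.le p
      calc phiShift p δ q t ≤ 2 * A ^ p := hchain
        _ ≤ 2 * (lam ^ p * B ^ p) := by linarith
        _ ≤ 2 * ((ε * c₀ ^ 2 / 18) * B ^ p) := by
            apply mul_le_mul_of_nonneg_left _ (by norm_num : (0:ℝ) ≤ 2)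
            exact mul_le_mul_of_nonneg_right hlamp hBpnn
        _ ≤ 2 * ((ε * c₀ ^ 2 / 18) * (9 * GP ^ 2)) := by
            apply mul_le_mul_of_nonneg_left _ (by norm_num : (0:ℝ) ≤ 2)
            exact mul_le_mul_of_nonneg_left hBp (by positivity)
        _ = ε * (c₀ ^ 2 * GP ^ 2) := by ring
        _ ≤ ε * (normF (Fmap p δ Q - Fmap p δ P)) ^ 2 := by
            apply mul_le_mul_of_nonneg_left hdiff2 hε.le
    calc phiShift p δ q t ≤ ε * (normF (Fmap p δ Q - Fmap p δ P)) ^ 2 := hfinal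
      _ ≤ _ := le_add_of_nonneg_left (by positivity)
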